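/- arXiv:2512.22985 — 2 statements merged into one kernel-verified Lean document; each statement's English description precedes it below -/
import Mathlib

section
/- Let P be a polynomial in x₀, …, x_r and Q a positive-definite quadratic form on ℝ^r. Then there exist B > 0 and t₀ > 0 such that for all 0 < t < t₀, ∑_{λ ∈ ℕ^r} exp(-Q(tλ)/2)·|P(t, tλ)| < B·t^{-r}. -/
set_option maxHeartbeats 1000000


lemma posdef_bound {r : ℕ} (Q : QuadraticForm ℝ (Fin r → ℝ)) (hQ : Q.PosDef) :
    ∃ a > (0:ℝ), ∀ x : Fin r → ℝ, a * ∑ i, x i ^ 2 ≤ Q x := by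
  rcases Nat.eq_zero_or_pos r with hr | hr
  · refine ⟨1, one_pos, fun x => ?_⟩
    subst hr
    have hx : x = 0 := funext fun i => i.elim0
    have : Q x = 0 := by rw [hx]; exact QuadraticMap.map_zero Q
    simp [this]
  set B := QuadraticMap.associatedHom ℝ Q with hBdef
  have key : ∀ x : Fin r → ℝ,
      Q x = ∑ i, ∑ j, x i * x j * B (fun k => if i = k then 1 else 0) (fun k => if j = k then 1 else 0) := by
    intro x
    conv_lhs => rw [← QuadraticMap.associated_eq_self_apply ℝ Q x]
    conv_lhs => rw [pi_eq_sum_univ x]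
    simp only [map_sum, LinearMap.sum_apply, map_smul, LinearMap.smul_apply, smul_eq_mul,
      Finset.mul_sum, Finset.sum_mul]
    rw [Finset.sum_comm]
    refine Finset.sum_congr rfl fun i _ => Finset.sum_congr rfl fun j _ => by ring
  have hcont : Continuous fun x : Fin r → ℝ => Q x := by
    have : (fun x : Fin r → ℝ => Q x) = fun x => ∑ i, ∑ j, x i * x j *
        B (fun k => if i = k then 1 else 0) (fun k => if j = k then 1 else 0) := funext key
    rw [this]
    exact continuous_finset_sum _ fun i _ => continuous_finset_sum _ fun j _ =>
      (((continuous_apply i).mul (continuous_apply j)).mul continuous_const)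
  haveI : Nonempty (Fin r) := ⟨⟨0, hr⟩⟩
  have hsph : (Metric.sphere (0 : Fin r → ℝ) 1).Nonempty :=
    NormedSpace.sphere_nonempty.2 zero_le_one
  obtain ⟨u, hu, humin⟩ := (isCompact_sphere (0 : Fin r → ℝ) 1).exists_isMinOn hsph
    hcont.continuousOn
  have hu1 : ‖u‖ = 1 := mem_sphere_zero_iff_norm.1 hu
  have hu0 : u ≠ 0 := by intro h; rw [h] at hu1; simp at hu1
  set c := Q u with hc
  have hcpos : 0 < c := hQ u hu0
  refine ⟨c / r, div_pos hcpos (by exact_mod_cast hr), fun x => ?_⟩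
  have hsum : ∑ i, x i ^ 2 ≤ (r : ℝ) * ‖x‖ ^ 2 := by
    calc ∑ i, x i ^ 2 ≤ ∑ _i : Fin r, ‖x‖ ^ 2 := by
          refine Finset.sum_le_sum fun i _ => ?_
          have h2 : |x i| ≤ ‖x‖ := norm_le_pi_norm x i
          nlinarith [abs_nonneg (x i), sq_abs (x i)]
      _ = (r : ℝ) * ‖x‖ ^ 2 := by simp [mul_comm]
  have hQx : c * ‖x‖ ^ 2 ≤ Q x := by
    rcases eq_or_ne x 0 with rfl | hx0
    · simp
    · have hnx : 0 < ‖x‖ := norm_pos_iff.2 hx0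
      set v := ‖x‖⁻¹ • x with hv
      have hvs : v ∈ Metric.sphere (0 : Fin r → ℝ) 1 := by
        rw [mem_sphere_zero_iff_norm, hv, norm_smul, norm_inv, norm_norm,
          inv_mul_cancel₀ hnx.ne']
      have hxe : x = ‖x‖ • v := by rw [hv, smul_inv_smul₀ hnx.ne']
      have hQxv : Q x = (‖x‖ * ‖x‖) * Q v := by
        conv_lhs => rw [hxe, QuadraticMap.map_smul]
        rw [smul_eq_mul]
      have hQv : c ≤ Q v := humin hvs
      nlinarith [sq_nonneg ‖x‖]
  have hrne : (r:ℝ) ≠ 0 := by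
    exact_mod_cast hr.ne'
  calc c / r * ∑ i, x i ^ 2
      ≤ c / r * ((r:ℝ) * ‖x‖^2) :=
        mul_le_mul_of_nonneg_left hsum (le_of_lt (div_pos hcpos (by exact_mod_cast hr)))
    _ = c * ‖x‖^2 := by field_simp
    _ ≤ Q x := hQx


lemma pi_prod_summable {r : ℕ} {h : ℕ → ℝ} (h0 : ∀ n, 0 ≤ h n) (hs : Summable h) :
    Summable (fun lam : Fin r → ℕ => ∏ i, h (lam i)) ∧
    ∑' lam : Fin r → ℕ, ∏ i, h (lam i) = (∑' n, h n) ^ r := by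
  induction r with
  | zero =>
      constructor
      · exact Summable.of_finite
      · rw [tsum_fintype]; simp
  | succ r ih =>
      obtain ⟨ihs, iht⟩ := ih
      have hnn1 : (0 : ℕ → ℝ) ≤ h := fun n => h0 n
      have hnn2 : (0 : (Fin r → ℕ) → ℝ) ≤ fun lam => ∏ i : Fin r, h (lam i) :=
        fun lam => Finset.prod_nonneg fun i _ => h0 _
      have hmul : Summable (fun p : ℕ × (Fin r → ℕ) => h p.1 * ∏ i : Fin r, h (p.2 i)) :=
        Summable.mul_of_nonneg (f := h) (g := fun lam : Fin r → ℕ => ∏ i : Fin r, h (lam i))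
          hs ihs hnn1 hnn2
      have hcomp : ∀ p : ℕ × (Fin r → ℕ),
          (∏ i, h ((Fin.consEquiv fun _ : Fin (r+1) => ℕ) p i))
            = h p.1 * ∏ i : Fin r, h (p.2 i) := by
        intro p
        rw [Fin.prod_univ_succ]
        simp [Fin.consEquiv]
      have hsum : Summable (fun lam : Fin (r+1) → ℕ => ∏ i, h (lam i)) := by
        rw [← (Fin.consEquiv fun _ : Fin (r+1) => ℕ).summable_iff]
        exact hmul.congr fun p => (hcomp p).symm
      refine ⟨hsum, ?_⟩
      have h1 : ∑' lam : Fin (r+1) → ℕ, ∏ i, h (lam i)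
          = ∑' p : ℕ × (Fin r → ℕ), h p.1 * ∏ i : Fin r, h (p.2 i) := by
        rw [← Equiv.tsum_eq (Fin.consEquiv fun _ : Fin (r+1) => ℕ)
          (fun lam => ∏ i, h (lam i))]
        exact tsum_congr hcomp
      rw [h1, Summable.tsum_prod hmul]
      simp_rw [tsum_mul_left, tsum_mul_right]
      rw [iht, pow_succ]
      ring


lemma one_add_pow_le_exp {b : ℝ} (hb : 0 < b) (d : ℕ) {x : ℝ} (hx : 0 ≤ x) :
    (1+x)^d ≤ ((d:ℝ)/b)^d * Real.exp (b*(1+x)) := by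
  rcases Nat.eq_zero_or_pos d with rfl | hd
  · simpa using Real.one_le_exp (by positivity)
  · have hdne : (d:ℝ) ≠ 0 := by exact_mod_cast hd.ne'
    have hy : (0:ℝ) ≤ b/d*(1+x) := by positivity
    have h1 : (1+x) = ((d:ℝ)/b) * (b/d*(1+x)) := by field_simp
    have h2 : b/d*(1+x) ≤ Real.exp (b/d*(1+x)) := by
      have := Real.add_one_le_exp (b/d*(1+x)); linarith
    calc (1+x)^d = ((d:ℝ)/b)^d * (b/d*(1+x))^d := by rw [← mul_pow, ← h1]
      _ ≤ ((d:ℝ)/b)^d * (Real.exp (b/d*(1+x)))^d := by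
          refine mul_le_mul_of_nonneg_left (pow_le_pow_left₀ hy h2 d) (by positivity)
      _ = ((d:ℝ)/b)^d * Real.exp (b*(1+x)) := by
          rw [← Real.exp_nat_mul]
          congr 1
          field_simp

lemma gauss_sum {b t : ℝ} (hb : 0 < b) (ht : 0 < t) :
    Summable (fun n : ℕ => Real.exp (-(b * (t*n)^2))) ∧
    (2*b*t ≤ 1 → ∑' n : ℕ, Real.exp (-(b * (t*n)^2))
      ≤ (Real.exp (b+1) / (2*b)) / t) := by
  set q := Real.exp (-(2*b*t)) with hqdef
  have hq0 : 0 ≤ q := (Real.exp_pos _).le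
  have hq1 : q < 1 := by
    rw [hqdef, Real.exp_lt_one_iff]
    nlinarith
  have hbound : ∀ n : ℕ, Real.exp (-(b*(t*n)^2)) ≤ Real.exp b * q ^ n := by
    intro n
    rw [hqdef, ← Real.exp_nat_mul, ← Real.exp_add]
    apply Real.exp_le_exp.2
    have h1 : 0 ≤ b * (t*(n:ℝ) - 1)^2 := by positivity
    nlinarith
  have hgs : Summable (fun n : ℕ => Real.exp b * q ^ n) :=
    (summable_geometric_of_lt_one hq0 hq1).mul_left _
  have hsumm : Summable (fun n : ℕ => Real.exp (-(b*(t*n)^2))) :=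
    Summable.of_nonneg_of_le (fun n => (Real.exp_pos _).le) hbound hgs
  refine ⟨hsumm, fun hts => ?_⟩
  have h1 : ∑' n : ℕ, Real.exp (-(b*(t*n)^2)) ≤ ∑' n : ℕ, Real.exp b * q ^ n :=
    Summable.tsum_le_tsum hbound hsumm hgs
  rw [tsum_mul_left, tsum_geometric_of_lt_one hq0 hq1] at h1
  set s := 2*b*t with hsdef
  have hs0 : 0 < s := by positivity
  have hE : s + 1 ≤ Real.exp s := Real.add_one_le_exp s
  have hEpos : 0 < Real.exp s := Real.exp_pos s
  have hqe : q = (Real.exp s)⁻¹ := by rw [hqdef, Real.exp_neg]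
  have hmono : (Real.exp s)⁻¹ ≥ Real.exp (-(1:ℝ)) := by
    rw [← Real.exp_neg]
    exact Real.exp_le_exp.2 (by linarith)
  have hlow : s * Real.exp (-(1:ℝ)) ≤ 1 - q := by
    rw [hqe]
    have hinv : Real.exp s * (Real.exp s)⁻¹ = 1 := mul_inv_cancel₀ hEpos.ne'
    nlinarith [inv_pos.2 hEpos]
  have hlowpos : 0 < s * Real.exp (-(1:ℝ)) := by positivity
  have hfin : (1 - q)⁻¹ ≤ (s * Real.exp (-(1:ℝ)))⁻¹ := by
    apply inv_anti₀ hlowpos hlow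
  have h2 : ∑' n : ℕ, Real.exp (-(b*(t*n)^2)) ≤ Real.exp b * (s * Real.exp (-(1:ℝ)))⁻¹ := by
    refine h1.trans (mul_le_mul_of_nonneg_left hfin (Real.exp_pos b).le)
  refine h2.trans (le_of_eq ?_)
  rw [mul_inv, Real.exp_neg, inv_inv, Real.exp_add]
  field_simp [hsdef]
  exact hsdef.symm


open MvPolynomial

/-- Absolute upper bound for a Gaussian-weighted lattice sum of polynomial
values: `∑_{λ ∈ ℕ^r} exp(-Q(tλ)/2) |P(t, tλ)| < B t^{-r}` for small `t > 0`. -/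
theorem stmt2 (r : ℕ) (P : MvPolynomial (Fin (r + 1)) ℝ)
    (Q : QuadraticForm ℝ (Fin r → ℝ)) (hQ : Q.PosDef) :
    (∀ t : ℝ, 0 < t →
      Summable (fun lam : Fin r → ℕ =>
        Real.exp (-Q (fun i => t * (lam i : ℝ)) / 2) *
          |MvPolynomial.eval (Fin.cons t fun i => t * (lam i : ℝ)) P|)) ∧
    ∃ B > (0 : ℝ), ∃ t₀ > (0 : ℝ), ∀ t : ℝ, 0 < t → t < t₀ →
      (∑' lam : Fin r → ℕ,
        Real.exp (-Q (fun i => t * (lam i : ℝ)) / 2) *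
          |MvPolynomial.eval (Fin.cons t fun i => t * (lam i : ℝ)) P|)
        < B / t ^ r := by
  obtain ⟨a, ha, hQa⟩ := posdef_bound Q hQ
  set b := a/4 with hbdef
  have hb : 0 < b := by positivity
  set d := P.totalDegree with hd
  set S := ∑ m ∈ P.support, |MvPolynomial.coeff m P| with hSdef
  have hS0 : 0 ≤ S := Finset.sum_nonneg fun m _ => abs_nonneg _
  set K := ((d:ℝ)/b)^d * Real.exp b with hKdef
  have hK0 : 0 ≤ K := by positivity
  -- pointwise bound
  have key : ∀ t : ℝ, 0 < t → ∀ lam : Fin r → ℕ,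
      Real.exp (-Q (fun i => t * (lam i : ℝ)) / 2) *
          |MvPolynomial.eval (Fin.cons t fun i => t * (lam i : ℝ)) P|
        ≤ (S * (max 1 t)^d * K^r) * ∏ i, Real.exp (-(b * (t * (lam i : ℝ))^2)) := by
    intro t ht lam
    set x : Fin r → ℝ := fun i => t * (lam i : ℝ) with hx
    have hx0 : ∀ i, 0 ≤ x i := fun i => by positivity
    -- exponential bound
    have hexp : Real.exp (-Q x / 2) ≤ ∏ i, Real.exp (-(2*b* x i ^2)) := by
      rw [← Real.exp_sum]
      apply Real.exp_le_exp.2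
      have hsum : ∑ i, -(2*b*x i^2) = -(2*b*∑ i, x i^2) := by
        rw [Finset.mul_sum, ← Finset.sum_neg_distrib]
      rw [hsum]
      have := hQa x
      rw [hbdef]
      linarith
    -- polynomial bound
    have habs : |MvPolynomial.eval (Fin.cons t x) P|
        ≤ S * ((max 1 t)^d * ∏ i, (1 + x i^2)^d) := by
      rw [MvPolynomial.eval_eq]
      refine (Finset.abs_sum_le_sum_abs _ _).trans ?_
      have hterm : ∀ m ∈ P.support,
          |MvPolynomial.coeff m P * ∏ j ∈ m.support, (Fin.cons t x : Fin (r+1) → ℝ) j ^ m j|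
          ≤ |MvPolynomial.coeff m P| * ((max 1 t)^d * ∏ i, (1 + x i^2)^d) := by
        intro m hm
        rw [abs_mul]
        refine mul_le_mul_of_nonneg_left ?_ (abs_nonneg _)
        rw [Finset.abs_prod]
        set w : Fin (r+1) → ℝ := Fin.cons ((max 1 t)^d) (fun i => (1 + x i^2)^d) with hw
        have hw1 : ∀ j, 1 ≤ w j := by
          intro j
          refine Fin.cases ?_ ?_ j
          · show (1:ℝ) ≤ w 0
            rw [hw, Fin.cons_zero]
            exact one_le_pow₀ (le_max_left _ _)
          · intro i
            show (1:ℝ) ≤ w i.succ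
            rw [hw, Fin.cons_succ]
            exact one_le_pow₀ (by nlinarith [sq_nonneg (x i)])
        have hmd : ∀ j ∈ m.support, m j ≤ d := by
          intro j hj
          have h1 : m j ≤ ∑ k ∈ m.support, m k :=
            Finset.single_le_sum (fun _ _ => Nat.zero_le _) hj
          have h2 : (m.sum fun _ e => e) ≤ d := MvPolynomial.le_totalDegree hm
          have h3 : (m.sum fun _ e => e) = ∑ k ∈ m.support, m k := rfl
          omega
        have hle : ∀ j ∈ m.support, |(Fin.cons t x : Fin (r+1) → ℝ) j ^ m j| ≤ w j := by
          intro j hj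
          rw [abs_pow]
          rcases Fin.eq_zero_or_eq_succ j with rfl | ⟨i, rfl⟩
          · rw [hw, Fin.cons_zero, Fin.cons_zero]
            calc |t| ^ m 0 ≤ (max 1 t) ^ m 0 := by
                  refine pow_le_pow_left₀ (abs_nonneg t) ?_ _
                  rw [abs_of_pos ht]; exact le_max_right _ _
              _ ≤ (max 1 t) ^ d := pow_le_pow_right₀ (le_max_left _ _) (hmd 0 hj)
          · rw [hw, Fin.cons_succ, Fin.cons_succ]
            calc |x i| ^ m i.succ ≤ (1 + x i^2) ^ m i.succ := by
                  refine pow_le_pow_left₀ (abs_nonneg _) ?_ _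
                  rw [abs_of_nonneg (hx0 i)]
                  nlinarith [sq_nonneg (x i - 1)]
              _ ≤ (1 + x i^2) ^ d :=
                  pow_le_pow_right₀ (by nlinarith [sq_nonneg (x i)]) (hmd _ hj)
        calc ∏ j ∈ m.support, |(Fin.cons t x : Fin (r+1) → ℝ) j ^ m j|
            = ∏ j, (if j ∈ m.support then |(Fin.cons t x : Fin (r+1) → ℝ) j ^ m j| else 1) := by
              rw [Finset.prod_ite_mem, Finset.univ_inter]
          _ ≤ ∏ j, w j := by
              refine Finset.prod_le_prod (fun j _ => ?_) (fun j _ => ?_)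
              · by_cases hj : j ∈ m.support <;> simp [hj, abs_nonneg]
              · by_cases hj : j ∈ m.support
                · simpa [hj] using hle j hj
                · simpa [hj] using hw1 j
          _ = (max 1 t)^d * ∏ i, (1 + x i^2)^d := by
              rw [Fin.prod_univ_succ, hw]
              simp
      refine (Finset.sum_le_sum hterm).trans ?_
      rw [← Finset.sum_mul]
    -- combine
    have hcoord : ∀ i : Fin r, Real.exp (-(2*b*x i^2)) * (1 + x i^2)^d
        ≤ K * Real.exp (-(b * x i^2)) := by
      intro i
      have h1 := one_add_pow_le_exp hb d (sq_nonneg (x i))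
      calc Real.exp (-(2*b*x i^2)) * (1 + x i^2)^d
          ≤ Real.exp (-(2*b*x i^2)) * (((d:ℝ)/b)^d * Real.exp (b*(1+x i^2))) :=
            mul_le_mul_of_nonneg_left h1 (Real.exp_pos _).le
        _ = K * Real.exp (-(b * x i^2)) := by
            rw [hKdef]
            rw [mul_comm (Real.exp (-(2*b*x i^2)))]
            rw [mul_assoc (((d:ℝ)/b)^d), ← Real.exp_add]
            rw [show b * (1 + x i^2) + -(2*b*x i^2) = b + -(b * x i^2) from by ring]
            rw [Real.exp_add, ← mul_assoc]
    have hmain : Real.exp (-Q x / 2) * |MvPolynomial.eval (Fin.cons t x) P|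
        ≤ (S * (max 1 t)^d * K^r) * ∏ i, Real.exp (-(b * x i^2)) := by
      calc Real.exp (-Q x / 2) * |MvPolynomial.eval (Fin.cons t x) P|
          ≤ (∏ i, Real.exp (-(2*b* x i ^2))) * (S * ((max 1 t)^d * ∏ i, (1 + x i^2)^d)) := by
            refine mul_le_mul hexp habs (abs_nonneg _) (Finset.prod_nonneg fun i _ => (Real.exp_pos _).le)
        _ = (S * (max 1 t)^d) * ∏ i, (Real.exp (-(2*b* x i ^2)) * (1 + x i^2)^d) := by
            rw [Finset.prod_mul_distrib]
            ring
        _ ≤ (S * (max 1 t)^d) * ∏ i, (K * Real.exp (-(b * x i^2))) := by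
            refine mul_le_mul_of_nonneg_left ?_ (by positivity)
            exact Finset.prod_le_prod (fun i _ => by positivity) (fun i _ => hcoord i)
        _ = (S * (max 1 t)^d * K^r) * ∏ i, Real.exp (-(b * x i^2)) := by
            rw [Finset.prod_mul_distrib, Finset.prod_const, Finset.card_univ, Fintype.card_fin]
            ring
    have hxeq : ∀ i, -(b * x i^2) = -(b * (t * (lam i : ℝ))^2) := fun i => by rw [hx]
    calc Real.exp (-Q (fun i => t * (lam i : ℝ)) / 2) *
          |MvPolynomial.eval (Fin.cons t fun i => t * (lam i : ℝ)) P|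
        = Real.exp (-Q x / 2) * |MvPolynomial.eval (Fin.cons t x) P| := by rw [hx]
      _ ≤ (S * (max 1 t)^d * K^r) * ∏ i, Real.exp (-(b * x i^2)) := hmain
      _ = (S * (max 1 t)^d * K^r) * ∏ i, Real.exp (-(b * (t * (lam i : ℝ))^2)) := by
          exact congrArg _ (Finset.prod_congr rfl fun i _ => by rw [hxeq i])
  -- summability
  have hsummable : ∀ t : ℝ, 0 < t →
      Summable (fun lam : Fin r → ℕ =>
        Real.exp (-Q (fun i => t * (lam i : ℝ)) / 2) *
          |MvPolynomial.eval (Fin.cons t fun i => t * (lam i : ℝ)) P|) := by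
    intro t ht
    obtain ⟨hsh, _⟩ := gauss_sum hb ht
    obtain ⟨hpi, _⟩ := pi_prod_summable (r := r) (fun n => (Real.exp_pos _).le) hsh
    refine Summable.of_nonneg_of_le (fun lam => by positivity) (key t ht) (hpi.mul_left _)
  refine ⟨hsummable, ?_⟩
  set E := Real.exp (b+1) / (2*b) with hEdef
  have hE0 : 0 < E := by positivity
  refine ⟨S * K^r * E^r + 1, by positivity, min 1 (1/(2*b)), by positivity, ?_⟩
  intro t ht htlt
  have ht1 : t ≤ 1 := le_of_lt (lt_of_lt_of_le htlt (min_le_left _ _))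
  have ht2 : 2*b*t ≤ 1 := by
    have := lt_of_lt_of_le htlt (min_le_right _ _)
    rw [lt_div_iff₀ (by positivity)] at this
    linarith
  have hmax : max 1 t = 1 := max_eq_left ht1
  obtain ⟨hsh, hts⟩ := gauss_sum hb ht
  obtain ⟨hpi, hpit⟩ := pi_prod_summable (r := r) (fun n => (Real.exp_pos _).le) hsh
  have h1 : (∑' lam : Fin r → ℕ,
        Real.exp (-Q (fun i => t * (lam i : ℝ)) / 2) *
          |MvPolynomial.eval (Fin.cons t fun i => t * (lam i : ℝ)) P|)
      ≤ ∑' lam : Fin r → ℕ, (S * (max 1 t)^d * K^r) * ∏ i, Real.exp (-(b * (t * (lam i : ℝ))^2)) :=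
    Summable.tsum_le_tsum (key t ht) (hsummable t ht) (hpi.mul_left _)
  rw [tsum_mul_left, hpit, hmax, one_pow, mul_one] at h1
  have h2 : (∑' n : ℕ, Real.exp (-(b * (t*(n:ℝ))^2))) ^ r ≤ (E/t)^r := by
    refine pow_le_pow_left₀ (tsum_nonneg fun n => (Real.exp_pos _).le) ?_ r
    exact hts ht2
  have h3 : S * K^r * (∑' n : ℕ, Real.exp (-(b * (t*(n:ℝ))^2))) ^ r ≤ S * K^r * (E/t)^r := by
    refine mul_le_mul_of_nonneg_left h2 (by positivity)
  have h4 : S * K^r * (E/t)^r = (S * K^r * E^r) / t^r := by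
    rw [div_pow]; ring
  have h5 : (S * K^r * E^r) / t^r < (S * K^r * E^r + 1) / t^r := by
    gcongr
    exact lt_add_one _
  calc _ ≤ S * K^r * (E/t)^r := le_trans h1 h3
    _ = (S * K^r * E^r) / t^r := h4
    _ < (S * K^r * E^r + 1) / t^r := h5
end

section
/- Let c > 0, d ∈ ℕ. Then ∑_{n=0}^∞ n^d exp(-c t² n²/2) = t^{-d-1}·∫_0^∞ x^d exp(-c x²/2) dx + O(t^{-d}) as t → 0⁺. -/
open Real MeasureTheory Set


lemma iUnion_Ioc_nat : (⋃ n : ℕ, Ioc (n : ℝ) (n + 1)) = Ioi 0 := by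
  ext x
  simp only [mem_iUnion, mem_Ioc, mem_Ioi]
  constructor
  · rintro ⟨n, hn, -⟩
    exact lt_of_le_of_lt (Nat.cast_nonneg n) hn
  · intro hx
    refine ⟨⌈x⌉₊ - 1, ?_, ?_⟩
    · have h1 : 1 ≤ ⌈x⌉₊ := Nat.one_le_ceil_iff.mpr hx
      have := Nat.ceil_lt_add_one hx.le
      push_cast [Nat.cast_sub h1]
      linarith
    · have h1 : 1 ≤ ⌈x⌉₊ := Nat.one_le_ceil_iff.mpr hx
      push_cast [Nat.cast_sub h1]
      have := Nat.le_ceil x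
      linarith

lemma key (g g' : ℝ → ℝ) (hg : ∀ x, HasDerivAt g (g' x) x)
    (hcont' : Continuous g')
    (hint : IntegrableOn g (Set.Ioi 0)) (hint' : IntegrableOn g' (Set.Ioi 0))
    (hsum : Summable (fun n : ℕ => g n)) :
    |(∑' n : ℕ, g n) - ∫ x in Set.Ioi (0:ℝ), g x| ≤ ∫ x in Set.Ioi (0:ℝ), |g' x| := by
  have habs : IntegrableOn (fun x => |g' x|) (Ioi (0:ℝ)) := hint'.abs
  have hmeas : ∀ n : ℕ, MeasurableSet (Ioc (n : ℝ) (n + 1)) := fun n => measurableSet_Ioc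
  have hdisj : Pairwise (Function.onFun Disjoint fun n : ℕ => Ioc (n : ℝ) (n + 1)) := by
    intro m n hmn
    apply Set.Ioc_disjoint_Ioc.mpr
    rcases hmn.lt_or_gt with h | h
    · have h' : (m:ℝ) + 1 ≤ n := by exact_mod_cast h
      exact (min_le_left _ _).trans (h'.trans (le_max_right _ _))
    · have h' : (n:ℝ) + 1 ≤ m := by exact_mod_cast h
      exact (min_le_right _ _).trans (h'.trans (le_max_left _ _))
  have hsub : ∀ n : ℕ, Ioc (n : ℝ) (n + 1) ⊆ Ioi 0 := fun n x hx =>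
    lt_of_le_of_lt (Nat.cast_nonneg n) hx.1
  have hIg : HasSum (fun n : ℕ => ∫ x in Ioc (n : ℝ) (n + 1), g x) (∫ x in Ioi (0:ℝ), g x) := by
    have := hasSum_integral_iUnion (f := g) (μ := volume) hmeas hdisj (by rw [iUnion_Ioc_nat]; exact hint)
    rwa [iUnion_Ioc_nat] at this
  have hIb : HasSum (fun n : ℕ => ∫ x in Ioc (n : ℝ) (n + 1), |g' x|) (∫ x in Ioi (0:ℝ), |g' x|) := by
    have := hasSum_integral_iUnion (f := fun x => |g' x|) (μ := volume) hmeas hdisj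
      (by rw [iUnion_Ioc_nat]; exact habs)
    rwa [iUnion_Ioc_nat] at this
  set b : ℕ → ℝ := fun n => ∫ x in Ioc (n : ℝ) (n + 1), |g' x| with hb
  set a : ℕ → ℝ := fun n => g n - ∫ x in Ioc (n : ℝ) (n + 1), g x with ha
  have hvol : ∀ n : ℕ, volume (Ioc (n : ℝ) (n + 1)) = 1 := by
    intro n
    rw [Real.volume_Ioc]
    norm_num
  have hbound : ∀ n : ℕ, |a n| ≤ b n := by
    intro n
    have hginteg : IntegrableOn g (Ioc (n : ℝ) (n + 1)) := hint.mono_set (hsub n)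
    have hconst : g n = ∫ x in Ioc (n : ℝ) (n + 1), g n := by
      rw [setIntegral_const, measureReal_def, hvol]
      simp
    have : a n = ∫ x in Ioc (n : ℝ) (n + 1), (g n - g x) := by
      rw [ha]
      simp only
      rw [integral_sub (integrableOn_const (μ := volume) (s := Ioc (n : ℝ) (n + 1)) (C := g n) (by rw [hvol]; norm_num)) hginteg, ← hconst]
    rw [this]
    have hb' : ∀ x ∈ Ioc (n : ℝ) (n + 1), ‖g n - g x‖ ≤ b n := by
      intro x hx
      have hxn : (n : ℝ) ≤ x := hx.1.le
      have hx1 : x ≤ (n : ℝ) + 1 := hx.2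
      have hftc : ∫ y in (n : ℝ)..x, g' y = g x - g n := by
        apply intervalIntegral.integral_eq_sub_of_hasDerivAt (fun y _ => hg y)
        exact (hcont'.intervalIntegrable _ _)
      have h1 : ‖g n - g x‖ = |∫ y in (n : ℝ)..x, g' y| := by
        rw [hftc, Real.norm_eq_abs, abs_sub_comm]
      rw [h1]
      calc |∫ y in (n : ℝ)..x, g' y| ≤ ∫ y in (n : ℝ)..x, |g' y| :=
            intervalIntegral.abs_integral_le_integral_abs hxn
        _ = ∫ y in Ioc (n : ℝ) x, |g' y| := by
            rw [intervalIntegral.integral_of_le hxn]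
        _ ≤ b n := by
            apply setIntegral_mono_set (habs.mono_set (hsub n))
            · filter_upwards with y using abs_nonneg _
            · exact HasSubset.Subset.eventuallyLE (Ioc_subset_Ioc_right hx1)
    have := norm_setIntegral_le_of_norm_le_const (μ := volume)
      (s := Ioc (n : ℝ) (n + 1)) (by rw [hvol]; exact ENNReal.one_lt_top) hb'
    rwa [measureReal_def, hvol, ENNReal.toReal_one, mul_one, Real.norm_eq_abs] at this
  have hasum : Summable a := hsum.sub hIg.summable
  have h1 : (∑' n : ℕ, g n) - ∫ x in Ioi (0:ℝ), g x = ∑' n, a n := by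
    rw [← hIg.tsum_eq, ← Summable.tsum_sub hsum hIg.summable]
  rw [h1]
  have habssum : Summable (fun n => |a n|) := hasum.abs
  calc |∑' n, a n| ≤ ∑' n, |a n| := by
        have := norm_tsum_le_tsum_norm (f := a) (by simpa [Real.norm_eq_abs] using habssum)
        simpa [Real.norm_eq_abs] using this
    _ ≤ ∑' n, b n := Summable.tsum_le_tsum hbound (hasum.abs) hIb.summable
    _ = ∫ x in Ioi (0:ℝ), |g' x| := hIb.tsum_eq

/-- Riemann-sum versus Gaussian-moment-integral comparison:
`∑_{n=0}^∞ n^d exp(-c t² n²/2) = t^{-d-1} ∫_0^∞ x^d exp(-c x²/2) dx + O(t^{-d})`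
as `t → 0⁺`. -/
theorem stmt4 (c : ℝ) (hc : 0 < c) (d : ℕ) :
    ∃ C : ℝ, ∃ t₀ > (0 : ℝ), ∀ t : ℝ, 0 < t → t < t₀ →
      |(∑' n : ℕ, (n : ℝ) ^ d * Real.exp (-c * t ^ 2 * (n : ℝ) ^ 2 / 2))
          - (∫ x in Set.Ioi (0 : ℝ), x ^ d * Real.exp (-c * x ^ 2 / 2)) / t ^ (d + 1)|
        ≤ C / t ^ d := by
 
  set f : ℝ → ℝ := fun x => x ^ d * Real.exp (-c * x ^ 2 / 2) with hfdef
  set F' : ℝ → ℝ := fun x =>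
    (d : ℝ) * x ^ (d - 1) * Real.exp (-c * x ^ 2 / 2)
      + x ^ d * (-(c * x) * Real.exp (-c * x ^ 2 / 2)) with hF'def
  have hf : ∀ x, HasDerivAt f (F' x) x := by
    intro x
    have h1 : HasDerivAt (fun x : ℝ => x ^ d) ((d : ℝ) * x ^ (d - 1)) x := hasDerivAt_pow d x
    have h2 : HasDerivAt (fun x : ℝ => Real.exp (-c * x ^ 2 / 2))
        (-(c * x) * Real.exp (-c * x ^ 2 / 2)) x := by
      have hinner : HasDerivAt (fun x : ℝ => -c * x ^ 2 / 2) (-(c * x)) x := by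
        have := ((hasDerivAt_pow 2 x).const_mul (-c)).div_const 2
        refine this.congr_deriv ?_
        push_cast
        ring
      simpa [mul_comm] using hinner.exp
    exact h1.mul h2
  have hpoly : ∀ k : ℕ, IntegrableOn (fun x => x ^ k * Real.exp (-c * x ^ 2 / 2)) (Set.Ioi 0) := by
    intro k
    have h0 := integrableOn_rpow_mul_exp_neg_mul_sq (half_pos hc) (s := (k : ℝ))
      (lt_of_lt_of_le neg_one_lt_zero (Nat.cast_nonneg k))
    have heq : (fun x : ℝ => x ^ k * Real.exp (-c * x ^ 2 / 2))
        = fun x : ℝ => x ^ (k : ℝ) * Real.exp (-(c / 2) * x ^ 2) := by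
      funext x
      rw [Real.rpow_natCast]
      congr 1
      ring
    rw [heq]
    exact h0
  have hcontF' : Continuous F' := by fun_prop
  have hFint : IntegrableOn F' (Set.Ioi 0) := by
    have h1 := (hpoly (d - 1)).const_mul (d : ℝ)
    have h2 := (hpoly (d + 1)).const_mul (-c)
    have : F' = fun x => (d : ℝ) * (x ^ (d - 1) * Real.exp (-c * x ^ 2 / 2))
        + (-c) * (x ^ (d + 1) * Real.exp (-c * x ^ 2 / 2)) := by
      funext x
      simp only [hF'def]
      ring
    rw [this]
    exact h1.add h2
  have hfint : IntegrableOn f (Set.Ioi 0) := hpoly d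
  refine ⟨∫ x in Set.Ioi (0 : ℝ), |F' x|, 1, one_pos, fun t ht ht1 => ?_⟩
  have htne : t ≠ 0 := ht.ne'
  set g : ℝ → ℝ := fun y => f (t * y) with hgdef
  set g' : ℝ → ℝ := fun y => t * F' (t * y) with hg'def
  have hg : ∀ y, HasDerivAt g (g' y) y := by
    intro y
    have hty : HasDerivAt (fun y : ℝ => t * y) t y := by
      simpa using (hasDerivAt_id y).const_mul t
    have := (hf (t * y)).comp y hty
    simpa [hg'def, mul_comm, Function.comp_def] using this
  have hgc' : Continuous g' := by
    simp only [hg'def]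
    exact continuous_const.mul (hcontF'.comp (continuous_const.mul continuous_id))
  have hgint : IntegrableOn g (Set.Ioi 0) := by
    have := (integrableOn_Ioi_comp_mul_left_iff f 0 ht).mpr (by simpa using hfint)
    simpa [hgdef] using this
  have hg'int : IntegrableOn g' (Set.Ioi 0) := by
    have := (integrableOn_Ioi_comp_mul_left_iff F' 0 ht).mpr (by simpa using hFint)
    simpa [hg'def, IntegrableOn] using this.const_mul t
  -- summability
  have hsum0 : Summable (fun n : ℕ => (n : ℝ) ^ d * Real.exp (-c * t ^ 2 * (n : ℝ) ^ 2 / 2)) := by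
    have hr : ‖Real.exp (-(c * t ^ 2 / 2))‖ < 1 := by
      rw [Real.norm_eq_abs, abs_of_pos (Real.exp_pos _)]
      rw [Real.exp_lt_one_iff]
      have : 0 < c * t ^ 2 / 2 := by positivity
      linarith
    have hgeom := summable_pow_mul_geometric_of_norm_lt_one (R := ℝ) d hr
    apply Summable.of_nonneg_of_le (fun n => by positivity) _ hgeom
    intro n
    apply mul_le_mul_of_nonneg_left _ (by positivity)
    rw [← Real.exp_nat_mul]
    apply Real.exp_le_exp.mpr
    have hn : (n : ℝ) ≤ (n : ℝ) ^ 2 := by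
      rcases Nat.eq_zero_or_pos n with h | h
      · simp [h]
      · have : (1 : ℝ) ≤ n := by exact_mod_cast h
        nlinarith
    have h2 := mul_le_mul_of_nonneg_left hn (by positivity : (0:ℝ) ≤ c * t ^ 2)
    linarith
  have hsumg : Summable (fun n : ℕ => g n) := by
    have : (fun n : ℕ => g n)
        = fun n : ℕ => t ^ d * ((n : ℝ) ^ d * Real.exp (-c * t ^ 2 * (n : ℝ) ^ 2 / 2)) := by
      funext n
      simp only [hgdef, hfdef]
      rw [mul_pow]
      ring_nf
    rw [this]
    exact hsum0.mul_left _
  have hkey := key g g' hg hgc' hgint hg'int hsumg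
  -- rewrite the three quantities
  have hS : (∑' n : ℕ, g n)
      = t ^ d * ∑' n : ℕ, (n : ℝ) ^ d * Real.exp (-c * t ^ 2 * (n : ℝ) ^ 2 / 2) := by
    rw [← tsum_mul_left]
    congr 1
    funext n
    simp only [hgdef, hfdef]
    rw [mul_pow]
    ring_nf
  have hI : (∫ y in Set.Ioi (0 : ℝ), g y) = t⁻¹ * ∫ x in Set.Ioi (0 : ℝ), f x := by
    have := integral_comp_mul_left_Ioi f 0 ht
    simpa [hgdef, smul_eq_mul] using this
  have hC : (∫ y in Set.Ioi (0 : ℝ), |g' y|) = ∫ x in Set.Ioi (0 : ℝ), |F' x| := by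
    have h1 : (fun y => |g' y|) = fun y => t * |F' (t * y)| := by
      funext y
      rw [hg'def, abs_mul, abs_of_pos ht]
    rw [h1, MeasureTheory.integral_const_mul]
    have := integral_comp_mul_left_Ioi (fun x => |F' x|) 0 ht
    rw [mul_zero] at this
    rw [this, smul_eq_mul, ← mul_assoc, mul_inv_cancel₀ htne, one_mul]
  rw [hS, hI, hC] at hkey
  rw [le_div_iff₀ (pow_pos ht d)]
  have hexpand : ∀ S I : ℝ, (S - I / t ^ (d + 1)) * t ^ d = t ^ d * S - t⁻¹ * I := by
    intro S I
    rw [pow_succ]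
    field_simp
  calc |(∑' n : ℕ, (n : ℝ) ^ d * Real.exp (-c * t ^ 2 * (n : ℝ) ^ 2 / 2))
          - (∫ x in Set.Ioi (0 : ℝ), x ^ d * Real.exp (-c * x ^ 2 / 2)) / t ^ (d + 1)| * t ^ d
      = |((∑' n : ℕ, (n : ℝ) ^ d * Real.exp (-c * t ^ 2 * (n : ℝ) ^ 2 / 2))
          - (∫ x in Set.Ioi (0 : ℝ), x ^ d * Real.exp (-c * x ^ 2 / 2)) / t ^ (d + 1)) * t ^ d| := by
        rw [abs_mul, abs_of_pos (pow_pos ht d)]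
    _ = |t ^ d * (∑' n : ℕ, (n : ℝ) ^ d * Real.exp (-c * t ^ 2 * (n : ℝ) ^ 2 / 2))
          - t⁻¹ * ∫ x in Set.Ioi (0 : ℝ), x ^ d * Real.exp (-c * x ^ 2 / 2)| := by
        rw [hexpand]
    _ ≤ ∫ x in Set.Ioi (0 : ℝ), |F' x| := hkey
end
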